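/- arXiv:2005.05503 — 3 statements merged into one kernel-verified Lean document; each statement's English description precedes it below -/
import Mathlib

section
/- The slack network obtained from a reaction network by the slack construction has the same deficiency as the original network, where deficiency δ = n − ℓ − s with n the number of complexes, ℓ the number of connected components of the reaction graph, and s the rank of the stoichiometry matrix. -/
/-- Deficiency of a reaction network with complex matrix `C`, connectivity matrix `S`
and `ℓ` connected components: `δ = n - ℓ - s` where `n` is the number of complexes
and `s` the rank of the stoichiometry matrix `C*S`. -/
noncomputable def deficiency {d cx rx : Type*} [Fintype cx] [Fintype rx]
    (C : Matrix d cx ℤ) (S : Matrix cx rx ℤ) (ℓ : ℕ) : ℤ :=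
  (Fintype.card cx : ℤ) - (ℓ : ℤ) - ((C * S).rank : ℤ)

/-- Key lemma: appending rows that are linear combinations of existing rows
(`W * A` below) does not change the rank. -/
lemma rank_fromRows_mul_self {d m rx : Type*} [Fintype d] [Fintype rx] [Fintype m]
    (A : Matrix d rx ℤ) (W : Matrix m d ℤ) :
    (Matrix.fromRows A (W * A)).rank = A.rank := by
  classical
  have h1 : Matrix.fromRows A (W * A) = Matrix.fromRows (1 : Matrix d d ℤ) W * A := by
    rw [Matrix.fromRows_mul, Matrix.one_mul]
  have hinj : Function.Injective (Matrix.fromRows (1 : Matrix d d ℤ) W).mulVecLin := by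
    intro v w h
    funext i
    have := congrFun h (Sum.inl i)
    simpa using this
  rw [h1, Matrix.rank, Matrix.mulVecLin_mul, LinearMap.range_comp, Matrix.rank]
  exact (Submodule.equivMapOfInjective _ hinj _).finrank_eq.symm

/-- The slack network (complex matrix `(C over D)` with `D = U - W*C`, same connectivity
matrix `S`, hence the same number of complexes and connected components `ℓ`) has the
same deficiency as the original network. -/
theorem slack_deficiency_eq {cx rx d m : Type*} [Fintype cx] [Fintype rx]
    [Fintype d] [Fintype m]
    (S : Matrix cx rx ℤ) (C : Matrix d cx ℤ) (W : Matrix m d ℤ) (U : Matrix m cx ℤ)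
    (ℓ : ℕ)
    (hcol : ∀ r : rx, ∃ i j : cx, i ≠ j ∧ S i r = -1 ∧ S j r = 1 ∧
      ∀ k : cx, k ≠ i → k ≠ j → S k r = 0)
    (hU : ∀ i : m, ∃ u : ℤ, ∀ j : cx, U i j = u) :
    deficiency (Matrix.fromRows C (U - W * C)) S ℓ = deficiency C S ℓ := by
  classical
  have hUS : U * S = 0 := by
    ext i r
    obtain ⟨u, hu⟩ := hU i
    obtain ⟨a, b, hab, ha, hb, hz⟩ := hcol r
    have hsum : ∀ k, U i k * S k r = u * S k r := fun k => by rw [hu k]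
    simp only [Matrix.mul_apply, Matrix.zero_apply]
    rw [Finset.sum_congr rfl (fun k _ => hsum k), ← Finset.mul_sum]
    have : ∑ k, S k r = 0 := by
      rw [← Finset.sum_subset (Finset.subset_univ ({a, b} : Finset cx))]
      · rw [Finset.sum_pair hab, ha, hb]; ring
      · intro k _ hk
        simp only [Finset.mem_insert, Finset.mem_singleton, not_or] at hk
        exact hz k hk.1 hk.2
    rw [this, mul_zero]
  have key : (Matrix.fromRows C (U - W * C) * S).rank = (C * S).rank := by
    have : Matrix.fromRows C (U - W * C) * S
        = Matrix.fromRows (C * S) ((-W) * (C * S)) := by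
      rw [Matrix.fromRows_mul, Matrix.sub_mul, hUS, zero_sub,
        Matrix.mul_assoc, ← Matrix.neg_mul]
    rw [this, rank_fromRows_mul_self]
  unfold deficiency
  rw [key]
end

section
/- Let X and X_N be the stochastic mass-action system of a complex balanced reaction network and the stochastic system of an associated regular slack network, respectively, with stationary distributions π and π_N. If π satisfies the stochastic complex balance equations for X, then the restriction of π to the finite state space S_N of X_N, normalized by a constant M_N, is a stationary distribution of X_N: π_N(x) = M_N·π(x) for x ∈ S_N. -/
/-- If `π` satisfies the stochastic complex balance equations of the original
mass-action system, then `π_N = M_N·π` is a stationary solution of the chemical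
master equation of the associated regular slack system. Here the slack system has
intensities `λ^N_{ν→ν'}(x) = λ_{ν→ν'}(x)·∏ᵢ 1_{Nᵢ - wᵢ·x ≥ ũ(ν)ᵢ}`, where `ũ = uY`
records the slack stoichiometric coefficients of each complex, and each reaction
satisfies the conservation identity `wᵢ·(ν'-ν) + ũ(ν')ᵢ - ũ(ν)ᵢ = 0`. -/
theorem slack_inherits_stationary_distribution {d m : ℕ} {R : Type*} [Fintype R]
    (src tgt : R → (Fin d → ℤ))
    (lam : R → (Fin d → ℤ) → ℝ)
    (w : Fin m → (Fin d → ℤ)) (Nvec : Fin m → ℤ)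
    (uY : (Fin d → ℤ) → (Fin m → ℤ))
    (hcons : ∀ r : R, ∀ i : Fin m,
      (∑ j, w i j * (tgt r j - src r j)) + uY (tgt r) i - uY (src r) i = 0)
    (π : (Fin d → ℤ) → ℝ)
    (hscb : ∀ νstar : Fin d → ℤ, ∀ x : Fin d → ℤ,
      ∑ r ∈ Finset.univ.filter (fun r : R => tgt r = νstar),
          lam r (x - tgt r + src r) * π (x - tgt r + src r)
        = ∑ r ∈ Finset.univ.filter (fun r : R => src r = νstar), lam r x * π x)
    (MN : ℝ)
    (lamN : R → (Fin d → ℤ) → ℝ)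
    (hlamN : ∀ r x, lamN r x = lam r x *
      ∏ i : Fin m, (if uY (src r) i ≤ Nvec i - ∑ j, w i j * x j then (1 : ℝ) else 0)) :
    ∀ x : Fin d → ℤ,
      ∑ r : R, lamN r (x - tgt r + src r) * (MN * π (x - tgt r + src r))
        = ∑ r : R, lamN r x * (MN * π x) := by
  intro x
  classical
  set T : Finset (Fin d → ℤ) :=
    Finset.univ.image tgt ∪ Finset.univ.image src with hT
  have hmem_t : ∀ r : R, tgt r ∈ T := fun r =>
    Finset.mem_union_left _ (Finset.mem_image_of_mem _ (Finset.mem_univ r))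
  have hmem_s : ∀ r : R, src r ∈ T := fun r =>
    Finset.mem_union_right _ (Finset.mem_image_of_mem _ (Finset.mem_univ r))
  set I : (Fin d → ℤ) → ℝ := fun ν =>
    ∏ i : Fin m, (if uY ν i ≤ Nvec i - ∑ j, w i j * x j then (1:ℝ) else 0) with hI
  have hshift : ∀ r : R, lamN r (x - tgt r + src r)
      = I (tgt r) * lam r (x - tgt r + src r) := by
    intro r
    rw [hlamN, mul_comm]
    congr 1
    refine Finset.prod_congr rfl fun i _ => ?_
    have hc := hcons r i
    rw [show (fun j => w i j * (tgt r j - src r j)) =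
        (fun j => w i j * tgt r j - w i j * src r j) from funext fun j => mul_sub _ _ _,
      Finset.sum_sub_distrib] at hc
    have hs : ∑ j, w i j * (x - tgt r + src r) j
        = (∑ j, w i j * x j) - (∑ j, w i j * tgt r j) + ∑ j, w i j * src r j := by
      simp [Pi.add_apply, Pi.sub_apply, mul_add, mul_sub,
        Finset.sum_add_distrib, Finset.sum_sub_distrib]
    rw [hs]
    have hiff : (uY (src r) i ≤ Nvec i - ((∑ j, w i j * x j) - (∑ j, w i j * tgt r j)
        + ∑ j, w i j * src r j)) ↔ (uY (tgt r) i ≤ Nvec i - ∑ j, w i j * x j) := by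
      omega
    simp [hiff]
  have hfib : ∀ (g : R → (Fin d → ℤ)), (∀ r, g r ∈ T) → ∀ (f : R → ℝ),
      ∑ r : R, f r = ∑ ν ∈ T, ∑ r ∈ Finset.univ.filter (fun r => g r = ν), f r :=
    fun g hg f => (Finset.sum_fiberwise_of_maps_to (fun r _ => hg r) f).symm
  calc ∑ r : R, lamN r (x - tgt r + src r) * (MN * π (x - tgt r + src r))
      = ∑ ν ∈ T, I ν * (MN * ∑ r ∈ Finset.univ.filter (fun r => tgt r = ν),
          lam r (x - tgt r + src r) * π (x - tgt r + src r)) := by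
        rw [hfib tgt hmem_t]
        refine Finset.sum_congr rfl fun ν _ => ?_
        rw [Finset.mul_sum, Finset.mul_sum]
        refine Finset.sum_congr rfl fun r hr => ?_
        have h2 := (Finset.mem_filter.mp hr).2
        rw [hshift r, h2]
        ring
    _ = ∑ ν ∈ T, I ν * (MN * ∑ r ∈ Finset.univ.filter (fun r => src r = ν),
          lam r x * π x) := by
        refine Finset.sum_congr rfl fun ν _ => ?_
        rw [hscb ν x]
    _ = ∑ r : R, lamN r x * (MN * π x) := by
        rw [hfib src hmem_s]
        refine Finset.sum_congr rfl fun ν _ => ?_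
        rw [Finset.mul_sum, Finset.mul_sum]
        refine Finset.sum_congr rfl fun r hr => ?_
        have h2 := (Finset.mem_filter.mp hr).2
        rw [hlamN, ← h2]
        simp only [hI]
        ring
end

section
/- For the Lotka–Volterra slack model with state x = (a, b) and reactions with intensities κ₁b with jump decreasing b by 1; κ₂ constant with jump increasing b; κ₃ constant with a jump contributing e^{−1}−1; κ₄a with jump decreasing a; κ₅a with jump increasing a, and the function V(a,b) = e^{a+b}: the drift satisfies Σ λ(x)(V(x+jump)−V(x)) = V(x)·(κ₁b(e^{−1}−1) + κ₂(e−1) + κ₃(e^{−1}−1) + κ₄a(e^{−1}−1) + κ₅a(e−1)). If κ₄(1−e^{−1}) > κ₅(e−1) and κ₁ > 0, then there exist M > 0 and C > 0 such that this drift is ≤ −C·V(x) whenever a > M or b > M, and hence there exists D > 0 such that the drift is ≤ −C·V(x) + D for all states (a,b) ∈ ℤ²_{≥0}. -/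
/-- Foster–Lyapunov function for the Lotka–Volterra model with migration: with
`V(a,b) = e^{a+b}`, the drift factorizes as
`V·(κ₁b(e⁻¹-1) + κ₂(e-1) + κ₃(e⁻¹-1) + κ₄a(e⁻¹-1) + κ₅a(e-1))`; if
`κ₄(1-e⁻¹) > κ₅(e-1)` and `κ₁ > 0`, the drift is `≤ -C·V` outside a finite box and
`≤ -C·V + D` everywhere on `ℤ²_{≥0}`. -/
theorem lotka_volterra_lyapunov (κ₁ κ₂ κ₃ κ₄ κ₅ : ℝ)
    (hκ₁ : 0 < κ₁) (hκ₂ : 0 ≤ κ₂) (hκ₃ : 0 ≤ κ₃) (hκ₄ : 0 ≤ κ₄) (hκ₅ : 0 ≤ κ₅)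
    (hcond : κ₅ * (Real.exp 1 - 1) < κ₄ * (1 - Real.exp (-1))) :
    let V : ℤ → ℤ → ℝ := fun a b => Real.exp ((a : ℝ) + (b : ℝ))
    let drift : ℤ → ℤ → ℝ := fun a b =>
      κ₁ * (b : ℝ) * (V a (b - 1) - V a b) + κ₂ * (V a (b + 1) - V a b)
      + κ₃ * (V (a - 1) b - V a b) + κ₄ * (a : ℝ) * (V (a - 1) b - V a b)
      + κ₅ * (a : ℝ) * (V (a + 1) b - V a b)
    (∀ a b : ℤ, drift a b
      = V a b * (κ₁ * (b : ℝ) * (Real.exp (-1) - 1) + κ₂ * (Real.exp 1 - 1)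
        + κ₃ * (Real.exp (-1) - 1) + κ₄ * (a : ℝ) * (Real.exp (-1) - 1)
        + κ₅ * (a : ℝ) * (Real.exp 1 - 1))) ∧
    ∃ M : ℝ, 0 < M ∧ ∃ C : ℝ, 0 < C ∧
      (∀ a b : ℤ, 0 ≤ a → 0 ≤ b → ((M < (a : ℝ)) ∨ (M < (b : ℝ))) →
        drift a b ≤ -C * V a b) ∧
      ∃ D : ℝ, 0 < D ∧ ∀ a b : ℤ, 0 ≤ a → 0 ≤ b → drift a b ≤ -C * V a b + D := by
  intro V drift
  set e1 := Real.exp 1 with he1def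
  set em := Real.exp (-1) with hemdef
  have he1 : (1:ℝ) < e1 := by
    have := Real.add_one_le_exp 1
    rw [he1def]; linarith
  have hem0 : (0:ℝ) < em := Real.exp_pos _
  have hem1 : em < 1 := by
    rw [hemdef]; calc Real.exp (-1) < Real.exp 0 := Real.exp_lt_exp.mpr (by norm_num)
      _ = 1 := Real.exp_zero
  -- factorization
  have hfac : ∀ a b : ℤ, drift a b
      = V a b * (κ₁ * (b : ℝ) * (em - 1) + κ₂ * (e1 - 1)
        + κ₃ * (em - 1) + κ₄ * (a : ℝ) * (em - 1)
        + κ₅ * (a : ℝ) * (e1 - 1)) := by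
    intro a b
    have hb1 : V a (b - 1) = em * V a b := by
      simp only [V, hemdef]; rw [← Real.exp_add]; congr 1; push_cast; ring
    have hb2 : V a (b + 1) = e1 * V a b := by
      simp only [V, he1def]; rw [← Real.exp_add]; congr 1; push_cast; ring
    have ha1 : V (a - 1) b = em * V a b := by
      simp only [V, hemdef]; rw [← Real.exp_add]; congr 1; push_cast; ring
    have ha2 : V (a + 1) b = e1 * V a b := by
      simp only [V, he1def]; rw [← Real.exp_add]; congr 1; push_cast; ring
    simp only [drift]
    rw [hb1, hb2, ha1, ha2]
    ring
  refine ⟨hfac, ?_⟩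
  set δ := κ₄ * (1 - em) - κ₅ * (e1 - 1) with hδdef
  have hδ : 0 < δ := by rw [hδdef]; linarith
  set β := κ₁ * (1 - em) with hβdef
  have hβ : 0 < β := by rw [hβdef]; nlinarith
  set c := min δ β with hcdef
  have hc : 0 < c := lt_min hδ hβ
  set K₀ := κ₂ * (e1 - 1) with hK₀def
  have hK₀ : 0 ≤ K₀ := by rw [hK₀def]; nlinarith
  set M := (K₀ + 1) / c + 1 with hMdef
  have hM : 0 < M := by positivity
  have hcM : K₀ + 1 + c ≤ c * M := by
    rw [hMdef]; rw [mul_add, mul_one, mul_div_cancel₀ _ (ne_of_gt hc)]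
  -- bound on the factor outside the box
  have hGout : ∀ a b : ℝ, 0 ≤ a → 0 ≤ b → (M < a ∨ M < b) →
      κ₁ * b * (em - 1) + κ₂ * (e1 - 1) + κ₃ * (em - 1) + κ₄ * a * (em - 1)
        + κ₅ * a * (e1 - 1) ≤ -1 := by
    intro a b ha hb h
    have hκ₃' : κ₃ * (em - 1) ≤ 0 := by nlinarith
    have hβb : 0 ≤ β * b := mul_nonneg hβ.le hb
    have hδa : 0 ≤ δ * a := mul_nonneg hδ.le ha
    have hkey : K₀ + 1 + c ≤ β * b + δ * a := by
      rcases h with h | h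
      · have : c * M ≤ δ * a := by
          calc c * M ≤ δ * M := by nlinarith [min_le_left δ β]
            _ ≤ δ * a := by nlinarith
        linarith
      · have : c * M ≤ β * b := by
          calc c * M ≤ β * M := by nlinarith [min_le_right δ β]
            _ ≤ β * b := by nlinarith
        linarith
    have heq : κ₁ * b * (em - 1) + κ₂ * (e1 - 1) + κ₃ * (em - 1) + κ₄ * a * (em - 1)
        + κ₅ * a * (e1 - 1) = K₀ + κ₃ * (em - 1) - β * b - δ * a := by
      rw [hK₀def, hβdef, hδdef]; ring
    rw [heq]
    linarith
  refine ⟨M, hM, 1, one_pos, ?_, ?_⟩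
  · intro a b ha hb h
    have hV : 0 < V a b := Real.exp_pos _
    have hG := hGout (a : ℝ) (b : ℝ) (by exact_mod_cast ha) (by exact_mod_cast hb) h
    rw [← hK₀def] at hG
    rw [hfac]
    have := mul_le_mul_of_nonneg_left hG hV.le
    linarith
  · refine ⟨Real.exp (2 * M) * (K₀ + 1) + 1, by positivity, ?_⟩
    intro a b ha hb
    by_cases h : M < (a : ℝ) ∨ M < (b : ℝ)
    · have hV : 0 < V a b := Real.exp_pos _
      have hG := hGout (a : ℝ) (b : ℝ) (by exact_mod_cast ha) (by exact_mod_cast hb) h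
      rw [← hK₀def] at hG
      rw [hfac]
      have h1 := mul_le_mul_of_nonneg_left hG hV.le
      have h2 : 0 < Real.exp (2 * M) * (K₀ + 1) := mul_pos (Real.exp_pos _) (by linarith)
      linarith
    · push_neg at h
      obtain ⟨haM, hbM⟩ := h
      have ha' : (0:ℝ) ≤ (a:ℝ) := by exact_mod_cast ha
      have hb' : (0:ℝ) ≤ (b:ℝ) := by exact_mod_cast hb
      have hβb : 0 ≤ β * (b:ℝ) := mul_nonneg hβ.le hb'
      have hδa : 0 ≤ δ * (a:ℝ) := mul_nonneg hδ.le ha'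
      have hκ₃' : κ₃ * (em - 1) ≤ 0 :=
        mul_nonpos_of_nonneg_of_nonpos hκ₃ (by linarith)
      have hG : κ₁ * (b:ℝ) * (em - 1) + K₀ + κ₃ * (em - 1)
          + κ₄ * (a:ℝ) * (em - 1) + κ₅ * (a:ℝ) * (e1 - 1) ≤ K₀ := by
        have heq : κ₁ * (b:ℝ) * (em - 1) + K₀ + κ₃ * (em - 1)
            + κ₄ * (a:ℝ) * (em - 1) + κ₅ * (a:ℝ) * (e1 - 1)
            = K₀ + κ₃ * (em - 1) - β * (b:ℝ) - δ * (a:ℝ) := by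
          rw [hβdef, hδdef]; ring
        rw [heq]; linarith
      have hVle : V a b ≤ Real.exp (2 * M) := by
        simp only [V]
        exact Real.exp_le_exp.mpr (by linarith)
      have hV : 0 < V a b := Real.exp_pos _
      rw [hfac]
      have h1 := mul_le_mul_of_nonneg_left hG hV.le
      have h2 : V a b * (K₀ + 1) ≤ Real.exp (2 * M) * (K₀ + 1) :=
        mul_le_mul_of_nonneg_right hVle (by linarith)
      have h3 : V a b * (K₀ + 1) = V a b * K₀ + V a b := by ring
      linarith
end
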